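/- Let ℓ_v, ℓ_w : [0,θ] → ℝ be nondecreasing Lipschitz functions with λ'_v ≥ λ'_w > 0, τ ≥ 0, and B := {ξ ∈ [0,θ] : ℓ_w(ξ) − ℓ_v(ξ) > τ}. Define D := 𝟙_{0∈B}·(ℓ_w(0)/λ'_w − ℓ_v(0)/λ'_v − τ/λ'_w). Then p := ∫_B (ℓ'_w(ξ)/λ'_w − ℓ'_v(ξ)/λ'_v) dξ + D ≥ 0. -/

import Mathlib

open Set MeasureTheory Filter
open scoped Classical Topology

/-- A monotone function has nonnegative (junk-extended) derivative everywhere. -/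
lemma aux_mono_deriv_nonneg {f : ℝ → ℝ} (hf : Monotone f) (x : ℝ) :
    0 ≤ deriv f x := by
  by_cases h : DifferentiableAt ℝ f x
  · have H := h.hasDerivAt
    rw [hasDerivAt_iff_tendsto_slope] at H
    have H' : Tendsto (slope f x) (𝓝[>] x) (𝓝 (deriv f x)) :=
      H.mono_left (nhdsWithin_mono _ fun y hy => Set.mem_compl_singleton_iff.2 (ne_of_gt hy))
    refine ge_of_tendsto H' ?_
    filter_upwards [self_mem_nhdsWithin] with y hy
    rw [slope_def_field]
    exact div_nonneg (sub_nonneg.2 (hf hy.le)) (sub_nonneg.2 hy.le)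
  · simp [deriv_zero_of_not_differentiableAt h]

/-- Lebesgue's inequality: for a monotone continuous function,
the integral of the derivative is at most the increment. -/
lemma aux_setIntegral_deriv_le {f : ℝ → ℝ} (hf : Monotone f) (hc : Continuous f)
    {a b : ℝ} (hab : a ≤ b) :
    ∫ x in Ioc a b, deriv f x ≤ f b - f a := by
  set μ := hf.stieltjesFunction.measure with hμ
  have heq : ∀ x, hf.stieltjesFunction x = f x := by
    intro x
    rw [hf.stieltjesFunction_eq]
    exact rightLim_eq_of_tendsto
      (hc.continuousAt.tendsto.mono_left nhdsWithin_le_nhds)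
  have hμIoc : μ (Ioc a b) = ENNReal.ofReal (f b - f a) := by
    rw [hμ, StieltjesFunction.measure_Ioc, heq, heq]
  have hd : ∀ᵐ x, deriv f x = (μ.rnDeriv volume x).toReal := by
    filter_upwards [hf.ae_hasDerivAt] with x hx using hx.deriv
  calc ∫ x in Ioc a b, deriv f x
      = ∫ x in Ioc a b, (μ.rnDeriv volume x).toReal :=
        integral_congr_ae (ae_restrict_of_ae hd)
    _ ≤ (μ (Ioc a b)).toReal :=
        Measure.setIntegral_toReal_rnDeriv_le (by rw [hμIoc]; exact ENNReal.ofReal_ne_top)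
    _ = f b - f a := by rw [hμIoc, ENNReal.toReal_ofReal (sub_nonneg.2 (hf hab))]

/-- The derivative of a Lipschitz function is integrable on a compact interval. -/
lemma aux_integrableOn_deriv {f : ℝ → ℝ} {K : NNReal} (hl : LipschitzWith K f)
    (a b : ℝ) : IntegrableOn (deriv f) (Icc a b) := by
  refine Integrable.mono'
    ((integrableOn_const measure_Icc_lt_top.ne) : IntegrableOn (fun _ => (K:ℝ)) _ _)
    (measurable_deriv f).aestronglyMeasurable ?_
  exact ae_of_all _ fun x => norm_deriv_le_of_lipschitz hl

/-- Converse inequality for monotone Lipschitz functions. -/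
lemma aux_le_setIntegral_deriv {f : ℝ → ℝ} {K : NNReal} (hf : Monotone f)
    (hl : LipschitzWith K f) {a b : ℝ} (hab : a ≤ b) :
    f b - f a ≤ ∫ x in Ioc a b, deriv f x := by
  set g := fun x => (K : ℝ) * x - f x with hg
  have hgm : Monotone g := by
    intro x y hxy
    have h1 : |f y - f x| ≤ (K : ℝ) * |y - x| := by
      simpa [Real.dist_eq] using hl.dist_le_mul y x
    have h2 : (K : ℝ) * |y - x| = (K : ℝ) * (y - x) := by
      rw [abs_of_nonneg (sub_nonneg.2 hxy)]
    have := (abs_le.1 (h2 ▸ h1)).2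
    simp only [hg]
    linarith
  have hgc : Continuous g := (continuous_const.mul continuous_id).sub hl.continuous
  have key := aux_setIntegral_deriv_le hgm hgc hab
  have hae : ∀ᵐ x, deriv g x = (K : ℝ) - deriv f x := by
    filter_upwards [hl.ae_differentiableAt] with x hx
    have : HasDerivAt g ((K : ℝ) * 1 - deriv f x) x :=
      ((hasDerivAt_id x).const_mul (K : ℝ)).sub hx.hasDerivAt
    simpa using this.deriv
  have hint : IntegrableOn (deriv f) (Ioc a b) :=
    (aux_integrableOn_deriv hl a b).mono_set Ioc_subset_Icc_self
  have hsplit : ∫ x in Ioc a b, deriv g x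
      = (K : ℝ) * (b - a) - ∫ x in Ioc a b, deriv f x := by
    rw [integral_congr_ae (ae_restrict_of_ae hae),
      integral_sub (integrableOn_const (C := (K:ℝ)) measure_Ioc_lt_top.ne) hint]
    simp [Real.volume_Ioc, ENNReal.toReal_ofReal (sub_nonneg.2 hab), mul_comm, max_eq_left (sub_nonneg.2 hab)]
  simp only [hg] at key
  rw [hsplit] at key
  linarith

/-- Dual-feasibility estimate for edges in `E^<`: with
`B = {ξ ∈ [0,θ] : ℓ_w(ξ) - ℓ_v(ξ) > τ}` and
`D = 𝟙_{0∈B}(ℓ_w(0)/λ'_w - ℓ_v(0)/λ'_v - τ/λ'_w)`, the quantity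
`p := ∫_B (ℓ'_w/λ'_w - ℓ'_v/λ'_v) + D` is nonnegative. -/
theorem stmt18 (θ τ lamv lamw : ℝ) (hθ : 0 ≤ θ) (hτ : 0 ≤ τ)
    (hlamw : 0 < lamw) (hlam : lamw ≤ lamv)
    (ℓv ℓw : ℝ → ℝ) (K : NNReal)
    (hlv : LipschitzWith K ℓv) (hlw : LipschitzWith K ℓw)
    (hmv : Monotone ℓv) (hmw : Monotone ℓw)
    (hv0 : 0 ≤ ℓv 0) :
    0 ≤ (∫ ξ in {ξ ∈ Icc 0 θ | τ < ℓw ξ - ℓv ξ},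
          (deriv ℓw ξ / lamw - deriv ℓv ξ / lamv)) +
        (if (0:ℝ) ∈ {ξ ∈ Icc 0 θ | τ < ℓw ξ - ℓv ξ}
          then (ℓw 0 / lamw - ℓv 0 / lamv - τ / lamw) else 0) := by
  have hlamv : 0 < lamv := lt_of_lt_of_le hlamw hlam
  set B : Set ℝ := {ξ ∈ Icc 0 θ | τ < ℓw ξ - ℓv ξ} with hB
  have hBeq : B = Icc 0 θ ∩ (fun ξ => ℓw ξ - ℓv ξ) ⁻¹' Ioi τ := by
    ext x; simp [hB, Set.mem_sep_iff, and_comm]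
  have hcont : Continuous fun ξ => ℓw ξ - ℓv ξ := hlw.continuous.sub hlv.continuous
  have hBm : MeasurableSet B := by
    rw [hBeq]
    exact measurableSet_Icc.inter (measurableSet_Ioi.preimage hcont.measurable)
  have hBsub : B ⊆ Icc 0 θ := fun x hx => hx.1
  -- the auxiliary monotone Lipschitz function m = max(ℓw, τ + ℓv)
  set m : ℝ → ℝ := fun x => max (ℓw x) (τ + ℓv x) with hm
  have hmm : Monotone m := hmw.max (monotone_const.add hmv)
  have hml : LipschitzWith K m := by
    have hca : LipschitzWith K (fun x => τ + ℓv x) :=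
      LipschitzWith.of_dist_le_mul fun x y => by
        simpa [dist_add_left] using hlv.dist_le_mul x y
    have := hlw.max hca
    simpa using this
  -- on B, deriv m = deriv ℓw
  have hderivB : ∀ x ∈ B, deriv m x = deriv ℓw x := by
    intro x hx
    have hU : ∀ᶠ y in 𝓝 x, m y = ℓw y := by
      have hopen : IsOpen ((fun ξ => ℓw ξ - ℓv ξ) ⁻¹' Ioi τ) :=
        isOpen_Ioi.preimage hcont
      have hxU : x ∈ (fun ξ => ℓw ξ - ℓv ξ) ⁻¹' Ioi τ := hx.2
      filter_upwards [hopen.mem_nhds hxU] with y hy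
      have : τ + ℓv y < ℓw y := by
        have : τ < ℓw y - ℓv y := hy
        linarith
      exact max_eq_left this.le
    exact Filter.EventuallyEq.deriv_eq hU
  -- a.e. on Icc \ B, deriv m = deriv ℓv
  have hderivC : ∀ᵐ x, x ∈ Icc 0 θ \ B → deriv m x - deriv ℓv x = 0 := by
    filter_upwards [hmm.ae_differentiableAt, hmv.ae_differentiableAt] with x hxm hxv hx
    set g : ℝ → ℝ := fun y => m y - ℓv y with hgdef
    have hgd : DifferentiableAt ℝ g x := hxm.sub hxv
    have hmin : IsLocalMin g x := by
      have hglob : ∀ y, g x ≤ g y := by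
        intro y
        have h1 : g x = τ := by
          have hle : ℓw x ≤ τ + ℓv x := by
            have : ¬ τ < ℓw x - ℓv x := fun h => hx.2 ⟨hx.1, h⟩
            linarith [not_lt.1 this]
          simp [hgdef, hm, max_eq_right hle]
        have h2 : τ ≤ g y := by
          have : τ + ℓv y ≤ m y := le_max_right _ _
          simp only [hgdef]; linarith
        rw [h1]; exact h2
      exact (isMinOn_univ_iff.2 fun y => hglob y).isLocalMin Filter.univ_mem
    have hz : deriv g x = 0 := hmin.deriv_eq_zero
    have : deriv g x = deriv m x - deriv ℓv x :=
      (hxm.hasDerivAt.sub hxv.hasDerivAt).deriv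
    linarith [this ▸ hz]
  -- integrability facts
  have hintw : IntegrableOn (deriv ℓw) B := (aux_integrableOn_deriv hlw 0 θ).mono_set hBsub
  have hintv : IntegrableOn (deriv ℓv) B := (aux_integrableOn_deriv hlv 0 θ).mono_set hBsub
  have hintvI : IntegrableOn (deriv ℓv) (Icc 0 θ) := aux_integrableOn_deriv hlv 0 θ
  have hintmI : IntegrableOn (deriv m) (Icc 0 θ) := aux_integrableOn_deriv hml 0 θ
  have hintmv : IntegrableOn (fun x => deriv m x - deriv ℓv x) (Icc 0 θ) := hintmI.sub hintvI
  -- step 1 : pointwise lower bound of the integrand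
  have step1 : ∫ ξ in B, (deriv ℓw ξ - deriv ℓv ξ) / lamw
      ≤ ∫ ξ in B, (deriv ℓw ξ / lamw - deriv ℓv ξ / lamv) := by
    refine setIntegral_mono ((hintw.sub hintv).div_const lamw)
      ((hintw.div_const lamw).sub (hintv.div_const lamv)) ?_
    intro x
    show (deriv ℓw x - deriv ℓv x) / lamw
        ≤ deriv ℓw x / lamw - deriv ℓv x / lamv
    have h1 : deriv ℓv x / lamv ≤ deriv ℓv x / lamw := by
      gcongr
      exact aux_mono_deriv_nonneg hmv x
    rw [sub_div]; linarith
  -- step 2 : on B the integrand equals deriv m - deriv ℓv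
  have step2 : ∫ ξ in B, (deriv ℓw ξ - deriv ℓv ξ) / lamw
      = (∫ ξ in B, (deriv m ξ - deriv ℓv ξ)) / lamw := by
    rw [← integral_div]
    refine setIntegral_congr_fun hBm fun x hx => ?_
    simp [hderivB x hx]
  -- step 3 : the integral over B equals the integral over Icc 0 θ
  have step3 : ∫ ξ in B, (deriv m ξ - deriv ℓv ξ)
      = ∫ ξ in Icc 0 θ, (deriv m ξ - deriv ℓv ξ) := by
    have hdiff : ∫ ξ in Icc 0 θ \ B, (deriv m ξ - deriv ℓv ξ) = 0 := by
      have hz : ∀ᵐ x ∂(volume.restrict (Icc 0 θ \ B)),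
          (fun ξ => deriv m ξ - deriv ℓv ξ) x = 0 := by
        rw [ae_restrict_iff' (measurableSet_Icc.diff hBm)]
        filter_upwards [hderivC] with x hx hx'
        exact hx hx'
      exact integral_eq_zero_of_ae hz
    have hd := integral_diff hBm hintmv hBsub
    rw [hdiff] at hd
    linarith
  -- step 4 : FTC-type bounds
  have hm_int : m θ - m 0 ≤ ∫ ξ in Icc 0 θ, deriv m ξ := by
    rw [integral_Icc_eq_integral_Ioc]
    exact aux_le_setIntegral_deriv hmm hml hθ
  have hv_int : ∫ ξ in Icc 0 θ, deriv ℓv ξ ≤ ℓv θ - ℓv 0 := by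
    rw [integral_Icc_eq_integral_Ioc]
    exact aux_setIntegral_deriv_le hmv hlv.continuous hθ
  have step4 : (m θ - ℓv θ) - (m 0 - ℓv 0)
      ≤ ∫ ξ in Icc 0 θ, (deriv m ξ - deriv ℓv ξ) := by
    rw [integral_sub hintmI hintvI]
    linarith
  have hθτ : τ ≤ m θ - ℓv θ := by
    have : τ + ℓv θ ≤ m θ := le_max_right _ _
    linarith
  -- combine : lower bound for the main integral
  have hJ : (τ - (m 0 - ℓv 0)) / lamw
      ≤ ∫ ξ in B, (deriv ℓw ξ / lamw - deriv ℓv ξ / lamv) := by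
    have h1 : (τ - (m 0 - ℓv 0)) / lamw
        ≤ (∫ ξ in B, (deriv m ξ - deriv ℓv ξ)) / lamw := by
      rw [step3]
      gcongr
      linarith
    calc (τ - (m 0 - ℓv 0)) / lamw
        ≤ (∫ ξ in B, (deriv m ξ - deriv ℓv ξ)) / lamw := h1
      _ = ∫ ξ in B, (deriv ℓw ξ - deriv ℓv ξ) / lamw := step2.symm
      _ ≤ _ := step1
  by_cases h0 : (0:ℝ) ∈ B
  · have hlt : τ + ℓv 0 < ℓw 0 := by
      have : τ < ℓw 0 - ℓv 0 := h0.2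
      linarith
    have hm0 : m 0 = ℓw 0 := max_eq_left hlt.le
    have hif : (if (0:ℝ) ∈ B then (ℓw 0 / lamw - ℓv 0 / lamv - τ / lamw) else 0)
        = ℓw 0 / lamw - ℓv 0 / lamv - τ / lamw := if_pos h0
    rw [hif]
    have h2 : ℓv 0 / lamv ≤ ℓv 0 / lamw := by gcongr
    have h3 : (τ - (ℓw 0 - ℓv 0)) / lamw
        = τ / lamw - ℓw 0 / lamw + ℓv 0 / lamw := by ring
    rw [hm0] at hJ
    rw [h3] at hJ
    linarith
  · have hle : ℓw 0 ≤ τ + ℓv 0 := by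
      have h00 : (0:ℝ) ∈ Icc 0 θ := ⟨le_refl 0, hθ⟩
      have : ¬ τ < ℓw 0 - ℓv 0 := fun h => h0 ⟨h00, h⟩
      linarith [not_lt.1 this]
    have hm0 : m 0 = τ + ℓv 0 := max_eq_right hle
    have hif : (if (0:ℝ) ∈ B then (ℓw 0 / lamw - ℓv 0 / lamv - τ / lamw) else 0) = 0 :=
      if_neg h0
    rw [hif, add_zero]
    have hz : (τ - (m 0 - ℓv 0)) / lamw = 0 := by
      rw [hm0]; ring_nf
    rw [hz] at hJ
    exact hJ
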